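/- Let p > 1, q > 0, m > 1, χ ∈ ℝ, and let w be the homoclinic solution of the core problem. Suppose that for some c ≠ 0 and α ∈ ℝ the function φ = c·w + α·w' satisfies the scalar NLEP with λ = 0: φ'' − φ + p w^{p−1} φ − mq·χ·w^p·(∫_ℝ w^{m−1}φ dy)/(∫_ℝ w^m dy) = 0. Then χ = (p−1)/(mq); equivalently, the zero-eigenvalue crossing condition 𝓐(0) = 1/χ(0) − mq/(p−1) = 0 holds. -/

import Mathlib

open MeasureTheory Real Filter

/-- The homoclinic solution of the core problem `w'' - w + w^p = 0`. -/
noncomputable def w (p : ℝ) (y : ℝ) : ℝ :=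
  ((p + 1) / 2) ^ (1 / (p - 1)) * (1 / Real.cosh ((p - 1) * y / 2)) ^ (2 / (p - 1))

/-!
Since `w' = -tanh((p-1)y/2) w` and `w'' = w - w^p`, the local operator `L₀` kills `w'` and sends
`w` to `(p-1) w^p`, so for `φ = c w + α w'` the NLEP at `λ = 0` reads
`c (p-1) w^p = m q χ w^p (∫ w^{m-1} φ) / ∫ w^m`. As `w` is even and `w'` odd,
`∫ w^{m-1} φ = c ∫ w^m`, and cancelling `c w^p ∫ w^m` leaves `p - 1 = m q χ`.
-/

theorem integral_eq_zero_of_odd {G E : Type*} [MeasurableSpace G] [AddGroup G] [MeasurableNeg G]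
    [NormedAddCommGroup E] [NormedSpace ℝ E] {μ : Measure G} [μ.IsNegInvariant] {f : G → E}
    (hf : ∀ x, f (-x) = -f x) : ∫ x, f x ∂μ = 0 := by
  have h : ∫ x, f x ∂μ = -∫ x, f x ∂μ := calc
    ∫ x, f x ∂μ = ∫ x, f (-x) ∂μ := (integral_neg_eq_self f μ).symm
    _ = ∫ x, -f x ∂μ := by simp only [hf]
    _ = -∫ x, f x ∂μ := integral_neg f
  rw [eq_neg_iff_add_eq_zero, ← two_smul ℝ] at h
  exact (smul_eq_zero.mp h).resolve_left two_ne_zero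

theorem Real.hasDerivAt_tanh (x : ℝ) : HasDerivAt tanh (1 - tanh x ^ 2) x := by
  have hc := (cosh_pos x).ne'
  rw [show tanh = fun x => sinh x / cosh x from funext tanh_eq_sinh_div_cosh]
  refine ((hasDerivAt_sinh x).fun_div (hasDerivAt_cosh x) hc).congr_deriv ?_
  field_simp

theorem Real.continuous_tanh : Continuous tanh :=
  continuous_iff_continuousAt.mpr fun x => (hasDerivAt_tanh x).continuousAt

section Homoclinic

variable {p : ℝ}

theorem w_pos (hp : 1 < p) (y : ℝ) : 0 < w p y := by
  have : 0 < (p + 1) / 2 := by linarith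
  unfold w; positivity

theorem w_neg (y : ℝ) : w p (-y) = w p y := by
  rw [w, w, show (p - 1) * -y / 2 = -((p - 1) * y / 2) by ring, cosh_neg]

theorem w_rpow_sub_one_mul (hp : 1 < p) (y : ℝ) (a : ℝ) :
    w p y ^ (a - 1) * w p y = w p y ^ a := by
  rw [rpow_sub (w_pos hp y), rpow_one, div_mul_cancel₀ _ (w_pos hp y).ne']

theorem w_rpow_sub_one (hp : 1 < p) (y : ℝ) :
    w p y ^ (p - 1) = (p + 1) / 2 * (1 - tanh ((p - 1) * y / 2) ^ 2) := by
  have h₁ : 0 < (p + 1) / 2 := by linarith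
  have h₂ : 0 < 1 / cosh ((p - 1) * y / 2) := by positivity
  have hp₁ : p - 1 ≠ 0 := by linarith
  rw [w, mul_rpow (by positivity) (by positivity), ← rpow_mul h₁.le, ← rpow_mul h₂.le,
    one_div_mul_cancel hp₁, div_mul_cancel₀ _ hp₁, rpow_one, rpow_two, tanh_eq_sinh_div_cosh]
  field_simp
  exact (cosh_sq_sub_sinh_sq _).symm

theorem hasDerivAt_w (hp : 1 < p) (y : ℝ) :
    HasDerivAt (w p) (-tanh ((p - 1) * y / 2) * w p y) y := by
  have hp₁ : p - 1 ≠ 0 := by linarith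
  have hc := (cosh_pos ((p - 1) * y / 2)).ne'
  have hs : 0 < 1 / cosh ((p - 1) * y / 2) := by positivity
  have hlin : HasDerivAt (fun y => (p - 1) * y / 2) ((p - 1) / 2) y := by
    simpa using ((hasDerivAt_id y).const_mul (p - 1)).div_const 2
  have hsech := ((hasDerivAt_cosh _).comp y hlin).fun_inv hc
  simp only [← one_div, Function.comp_apply] at hsech
  refine ((hsech.rpow_const (p := 2 / (p - 1)) (Or.inl hs.ne')).const_mul
    (((p + 1) / 2) ^ (1 / (p - 1)))).congr_deriv ?_
  rw [rpow_sub hs, rpow_one, w, tanh_eq_sinh_div_cosh]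
  field_simp

theorem deriv_w (hp : 1 < p) : deriv (w p) = fun y => -tanh ((p - 1) * y / 2) * w p y :=
  funext fun y => (hasDerivAt_w hp y).deriv

theorem deriv_w_neg (hp : 1 < p) (y : ℝ) : deriv (w p) (-y) = -deriv (w p) y := by
  simp only [deriv_w hp]
  rw [show (p - 1) * -y / 2 = -((p - 1) * y / 2) by ring, tanh_neg, w_neg]
  ring

theorem hasDerivAt_deriv_w (hp : 1 < p) (y : ℝ) :
    HasDerivAt (deriv (w p)) (w p y - w p y ^ p) y := by
  have hlin : HasDerivAt (fun y => (p - 1) * y / 2) ((p - 1) / 2) y := by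
    simpa using ((hasDerivAt_id y).const_mul (p - 1)).div_const 2
  rw [deriv_w hp]
  refine (((hasDerivAt_tanh _).comp y hlin).neg.mul (hasDerivAt_w hp y)).congr_deriv ?_
  rw [← w_rpow_sub_one_mul hp y p, w_rpow_sub_one hp]
  simp only [Function.comp_apply, Pi.neg_apply]
  ring

theorem deriv_deriv_w (hp : 1 < p) : deriv (deriv (w p)) = fun y => w p y - w p y ^ p :=
  funext fun y => (hasDerivAt_deriv_w hp y).deriv

theorem hasDerivAt_deriv_deriv_w (hp : 1 < p) (y : ℝ) :
    HasDerivAt (deriv (deriv (w p))) (deriv (w p) y - p * w p y ^ (p - 1) * deriv (w p) y) y := by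
  rw [deriv_deriv_w hp]
  have hw := hasDerivAt_w hp y
  refine (hw.sub (hw.rpow_const (p := p) (Or.inl (w_pos hp y).ne'))).congr_deriv ?_
  rw [hw.deriv]
  ring

noncomputable def localOperator (p : ℝ) (φ : ℝ → ℝ) (y : ℝ) : ℝ :=
  deriv (deriv φ) y - φ y + p * w p y ^ (p - 1) * φ y

theorem localOperator_comb (hp : 1 < p) (c α y : ℝ) :
    localOperator p (fun y => c * w p y + α * deriv (w p) y) y = c * (p - 1) * w p y ^ p := by
  have hw' (y : ℝ) : HasDerivAt (w p) (deriv (w p) y) y :=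
    (hasDerivAt_w hp y).differentiableAt.hasDerivAt
  have hw'' (y : ℝ) : HasDerivAt (deriv (w p)) (deriv (deriv (w p)) y) y :=
    (hasDerivAt_deriv_w hp y).differentiableAt.hasDerivAt
  have hφ' : deriv (fun y => c * w p y + α * deriv (w p) y) =
      fun y => c * deriv (w p) y + α * deriv (deriv (w p)) y :=
    funext fun y => (((hw' y).const_mul c).fun_add ((hw'' y).const_mul α)).deriv
  rw [localOperator, hφ',
    (((hw'' y).const_mul c).fun_add ((hasDerivAt_deriv_deriv_w hp y).const_mul α)).deriv,
    deriv_deriv_w hp]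
  linear_combination p * c * w_rpow_sub_one_mul hp y p

theorem integral_w_rpow_mul_deriv_w (hp : 1 < p) (m : ℝ) :
    ∫ t, w p t ^ (m - 1) * deriv (w p) t = 0 :=
  integral_eq_zero_of_odd fun t => by rw [w_neg, deriv_w_neg hp, mul_neg]

theorem integrable_w_rpow_mul_deriv_w (hp : 1 < p) {m : ℝ}
    (hint : Integrable fun t => w p t ^ m) :
    Integrable fun t => w p t ^ (m - 1) * deriv (w p) t := by
  have heq : (fun t => w p t ^ (m - 1) * deriv (w p) t) =
      fun t => -tanh ((p - 1) * t / 2) * w p t ^ m := by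
    funext t
    rw [deriv_w hp, ← w_rpow_sub_one_mul hp t m]
    ring
  rw [heq]
  refine hint.bdd_mul (c := 1) ?_ (ae_of_all _ fun t => ?_)
  · exact (continuous_tanh.comp (by fun_prop)).neg.aestronglyMeasurable
  · rw [norm_neg, norm_eq_abs]
    exact (abs_tanh_lt_one _).le

theorem integral_w_rpow_mul_comb (hp : 1 < p) {m : ℝ} (hint : Integrable fun t => w p t ^ m)
    (c α : ℝ) :
    ∫ t, w p t ^ (m - 1) * (c * w p t + α * deriv (w p) t) = c * ∫ t, w p t ^ m := by
  have heq : (fun t => w p t ^ (m - 1) * (c * w p t + α * deriv (w p) t)) =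
      fun t => c * w p t ^ m + α * (w p t ^ (m - 1) * deriv (w p) t) := by
    funext t
    rw [← w_rpow_sub_one_mul hp t m]
    ring
  rw [heq, integral_add (hint.const_mul c) ((integrable_w_rpow_mul_deriv_w hp hint).const_mul α),
    integral_const_mul, integral_const_mul, integral_w_rpow_mul_deriv_w hp, mul_zero, add_zero]

end Homoclinic

theorem zero_eigenvalue_crossing_general (p q m : ℝ) (hp : 1 < p)
    (χ : ℝ) (c α : ℝ) (hc : c ≠ 0)
    (φ : ℝ → ℝ) (hφ : φ = fun y => c * w p y + α * deriv (w p) y)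
    (hNLEP : ∀ y : ℝ,
      deriv (deriv φ) y - φ y + p * (w p y) ^ (p - 1) * φ y -
        m * q * χ * (w p y) ^ p *
          (∫ t : ℝ, (w p t) ^ (m - 1) * φ t) / (∫ t : ℝ, (w p t) ^ m)
        = 0) :
    χ = (p - 1) / (m * q) := by
  subst hφ
  beta_reduce at hNLEP
  set N := ∫ t, w p t ^ (m - 1) * (c * w p t + α * deriv (w p) t)
  set J := ∫ t, w p t ^ m
  have hL := localOperator_comb hp c α 0
  rw [localOperator] at hL
  have key : c * (p - 1) = m * q * χ * N / J :=
    mul_right_cancel₀ (rpow_pos_of_pos (w_pos hp 0) p).ne' (by linear_combination hNLEP 0 - hL)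
  -- `J = 0` would make the right-hand side vanish, so `w^m` is integrable without estimating it.
  have hJ : J ≠ 0 := by
    intro hJ
    rw [hJ, div_zero, mul_eq_zero] at key
    exact key.elim hc fun h => by linarith
  have hN : N = c * J := integral_w_rpow_mul_comb hp (.of_integral_ne_zero hJ) c α
  rw [hN, mul_div_assoc, mul_div_cancel_right₀ _ hJ] at key
  have hχ : p - 1 = m * q * χ := mul_left_cancel₀ hc (by linear_combination key)
  have hmq : m * q ≠ 0 := by
    rintro h
    rw [h, zero_mul] at hχ
    linarith
  rw [hχ, mul_div_cancel_left₀ χ hmq]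

/-- Zero-eigenvalue crossing: if `φ = c w + α w'` solves the scalar NLEP with
`λ = 0` and multiplier `χ`, then `χ = (p-1)/(mq)`, i.e. `𝓐(0) = 0`. -/
theorem zero_eigenvalue_crossing (p q m : ℝ) (hp : 1 < p) (hq : 0 < q) (hm : 1 < m)
    (χ : ℝ) (c α : ℝ) (hc : c ≠ 0)
    (φ : ℝ → ℝ) (hφ : φ = fun y => c * w p y + α * deriv (w p) y)
    (hNLEP : ∀ y : ℝ,
      deriv (deriv φ) y - φ y + p * (w p y) ^ (p - 1) * φ y -
        m * q * χ * (w p y) ^ p *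
          (∫ t : ℝ, (w p t) ^ (m - 1) * φ t) / (∫ t : ℝ, (w p t) ^ m)
        = 0) :
    χ = (p - 1) / (m * q) :=
  zero_eigenvalue_crossing_general p q m hp χ c α hc φ hφ hNLEP
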